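/- Let W_i = {−(n+β_i)/α_i : n ∈ ℕ ∪ {0}}, i = 1, 2, be two γ-sets. Then either the set difference W_1 \ W_2 is finite, or its density D(W_1 \ W_2) exists and is strictly positive; moreover, in the latter case W_1 \ W_2 is the union of finitely many γ-sets and a finite set. -/

import Mathlib

open Filter Topology

noncomputable section

/-- The γ(α,β)-set `{−(n+β)/α : n ∈ ℕ ∪ {0}} ⊆ ℂ`. -/
def gammaSet (α : ℝ) (β : ℂ) : Set ℂ :=
  {z : ℂ | ∃ n : ℕ, z = -((n : ℂ) + β) / (α : ℂ)}

/-- The counting function `N_S(T) = |S ∩ {s : Re s > −T}|` of a subset of ℂ. -/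
def countFun (S : Set ℂ) (T : ℝ) : ℕ :=
  (S ∩ {s : ℂ | -T < s.re}).ncard

/-- `S` has density `d` if `N_S(T)/T → d` as `T → ∞`. -/
def HasDensity (S : Set ℂ) (d : ℝ) : Prop :=
  Tendsto (fun T : ℝ => (countFun S T : ℝ) / T) atTop (𝓝 d)

end

/-! Write `W₁ = {g n}` with `g n = -(n + β₁)/α₁`. Then `g n ∈ W₂` iff `u n + c ∈ ℕ`, where
`u = α₂/α₁ > 0`. If this happens for two indices `n₀ < n₁`, then `u (n₁ - n₀)` is a natural
number, and from `n₀` on the set of such indices is periodic with period `n₁ - n₀`; otherwise it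
is finite. So the index set `A` of `W₁ \ W₂` is eventually `q`-periodic: it is a finite set together
with the progressions `n₀ + qℕ`, `n₀ ∈ A ∩ [N, N + q)`, and `g` maps such a progression onto the
γ-set `γ(α₁/q, (β₁ + n₀)/q)`. Densities of disjoint sets add and `D(γ(α, β)) = α`, so either no
progression occurs and `W₁ \ W₂` is finite, or its density is `|A ∩ [N, N + q)| α₁/q > 0`. -/

open Set

noncomputable def gammaSeq (α : ℝ) (β : ℂ) (n : ℕ) : ℂ :=
  -((n : ℂ) + β) / (α : ℂ)

theorem gammaSet_eq_range (α : ℝ) (β : ℂ) : gammaSet α β = range (gammaSeq α β) := by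
  ext z
  simp [gammaSet, gammaSeq, eq_comm]

theorem gammaSeq_injective {α : ℝ} (hα : α ≠ 0) (β : ℂ) : Function.Injective (gammaSeq α β) := by
  intro n m h
  have hαc : (α : ℂ) ≠ 0 := by exact_mod_cast hα
  simp only [gammaSeq, div_left_inj' hαc, neg_inj, add_left_inj, Nat.cast_inj] at h
  exact h

theorem neg_lt_re_gammaSeq_iff {α : ℝ} (hα : 0 < α) (β : ℂ) (n : ℕ) (T : ℝ) :
    -T < (gammaSeq α β n).re ↔ n < ⌈α * T - β.re⌉₊ := by
  rw [Nat.lt_ceil, gammaSeq, Complex.div_ofReal_re, Complex.neg_re, neg_div, neg_lt_neg_iff,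
    div_lt_iff₀ hα, Complex.add_re, Complex.natCast_re]
  constructor <;> intro h <;> linarith

theorem gammaSet_inter_halfPlane {α : ℝ} (hα : 0 < α) (β : ℂ) (T : ℝ) :
    gammaSet α β ∩ {s : ℂ | -T < s.re} = gammaSeq α β '' Iio ⌈α * T - β.re⌉₊ := by
  rw [gammaSet_eq_range, ← image_preimage_eq_range_inter]
  congr 1
  ext n
  exact neg_lt_re_gammaSeq_iff hα β n T

theorem finite_gammaSet_inter_halfPlane {α : ℝ} (hα : 0 < α) (β : ℂ) (T : ℝ) :
    (gammaSet α β ∩ {s : ℂ | -T < s.re}).Finite := by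
  rw [gammaSet_inter_halfPlane hα]
  exact (finite_Iio _).image _

theorem countFun_gammaSet {α : ℝ} (hα : 0 < α) (β : ℂ) (T : ℝ) :
    countFun (gammaSet α β) T = ⌈α * T - β.re⌉₊ := by
  rw [countFun, gammaSet_inter_halfPlane hα,
    ncard_image_of_injective _ (gammaSeq_injective hα.ne' β), ncard_Iio_nat]

theorem hasDensity_gammaSet {α : ℝ} (hα : 0 < α) (β : ℂ) : HasDensity (gammaSet α β) α := by
  have hx : Tendsto (fun T : ℝ => α * T - β.re) atTop atTop :=
    tendsto_atTop_add_const_right _ _ (tendsto_id.const_mul_atTop hα)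
  have hxT : Tendsto (fun T : ℝ => (α * T - β.re) / T) atTop (𝓝 α) := by
    have : Tendsto (fun T : ℝ => α - β.re * T⁻¹) atTop (𝓝 (α - β.re * 0)) :=
      tendsto_const_nhds.sub (tendsto_inv_atTop_zero.const_mul _)
    rw [mul_zero, sub_zero] at this
    refine this.congr' ?_
    filter_upwards [eventually_gt_atTop 0] with T hT
    field_simp
  have := ((tendsto_nat_ceil_div_atTop (R := ℝ)).comp hx).mul hxT
  rw [one_mul] at this
  refine this.congr' ?_
  filter_upwards [hx.eventually_gt_atTop 0, eventually_gt_atTop 0] with T hxpos hT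
  simp only [Function.comp_apply, countFun_gammaSet hα]
  field_simp

theorem Set.Finite.hasDensity_zero {E : Set ℂ} (hE : E.Finite) : HasDensity E 0 := by
  refine squeeze_zero' ?_ ?_ (tendsto_const_nhds.div_atTop tendsto_id (a := (E.ncard : ℝ)))
  · filter_upwards [eventually_gt_atTop 0] with T hT
    positivity
  · filter_upwards [eventually_gt_atTop 0] with T hT
    exact div_le_div_of_nonneg_right (by exact_mod_cast ncard_le_ncard inter_subset_left hE) hT.le

-- `ncard` is `0` on infinite sets, so `countFun` is additive only on sets with finite slices.
theorem HasDensity.union {S T : Set ℂ} {a b : ℝ} (hS : HasDensity S a) (hT : HasDensity T b)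
    (hST : Disjoint S T) (hfin : ∀ t : ℝ, ((S ∪ T) ∩ {s : ℂ | -t < s.re}).Finite) :
    HasDensity (S ∪ T) (a + b) := by
  have hcount (t : ℝ) : countFun (S ∪ T) t = countFun S t + countFun T t := by
    rw [countFun, union_inter_distrib_right] at *
    exact ncard_union_eq (hST.mono inter_subset_left inter_subset_left)
      ((hfin t).subset (by gcongr; exact subset_union_left))
      ((hfin t).subset (by gcongr; exact subset_union_right))
  unfold HasDensity at *
  simpa only [hcount, Nat.cast_add, add_div] using hS.add hT

theorem hasDensity_biUnion {ι : Type*} (s : Finset ι) {S : ι → Set ℂ} {a : ι → ℝ}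
    (hS : ∀ i ∈ s, HasDensity (S i) (a i)) (hd : (s : Set ι).PairwiseDisjoint S)
    (hfin : ∀ t : ℝ, ((⋃ i ∈ s, S i) ∩ {z : ℂ | -t < z.re}).Finite) :
    HasDensity (⋃ i ∈ s, S i) (∑ i ∈ s, a i) := by
  classical
  induction s using Finset.induction_on with
  | empty => simpa using finite_empty.hasDensity_zero
  | insert j s hj ih =>
    simp only [Finset.set_biUnion_insert, Finset.sum_insert hj] at hfin ⊢
    refine (hS j (Finset.mem_insert_self j s)).union ?_ ?_ hfin
    · refine ih (fun i hi => hS i (Finset.mem_insert_of_mem hi)) (hd.subset (by simp))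
        fun t => (hfin t).subset (by gcongr; exact subset_union_right)
    · refine disjoint_iUnion₂_right.mpr fun i hi => hd (by simp) (by simp [hi]) ?_
      rintro rfl
      exact hj hi

theorem exists_periodic_tail_setOf_natCast_eq {u : ℝ} (hu : 0 < u) (c : ℂ) :
    ∃ N q : ℕ, 0 < q ∧ ∀ n ≥ N, (n + q ∈ {n : ℕ | ∃ m : ℕ, (m : ℂ) = u * n + c} ↔
      n ∈ {n : ℕ | ∃ m : ℕ, (m : ℂ) = u * n + c}) := by
  set P := {n : ℕ | ∃ m : ℕ, (m : ℂ) = u * n + c}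
  rcases P.subsingleton_or_nontrivial with hP | hP
  · obtain ⟨N, hN⟩ := hP.finite.bddAbove
    refine ⟨N + 1, 1, one_pos, fun n hn => iff_of_false ?_ ?_⟩ <;> intro h <;> have := hN h <;>
      omega
  obtain ⟨n₀, ⟨m₀, hm₀⟩, n₁, ⟨m₁, hm₁⟩, hlt⟩ := hP.exists_lt
  have re_eq {n m : ℕ} (h : (m : ℂ) = u * n + c) : (m : ℝ) = u * n + c.re := by
    simpa using congrArg Complex.re h
  have hm₀₁ : m₀ ≤ m₁ := by
    have : (n₀ : ℝ) ≤ n₁ := by exact_mod_cast hlt.le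
    exact_mod_cast (show (m₀ : ℝ) ≤ m₁ by nlinarith [re_eq hm₀, re_eq hm₁])
  have hperiod : (u : ℂ) * ((n₁ - n₀ : ℕ) : ℂ) = m₁ - m₀ := by
    rw [Nat.cast_sub hlt.le, hm₀, hm₁]
    ring
  refine ⟨n₀, n₁ - n₀, by omega, fun n hn => ⟨?_, ?_⟩⟩
  · rintro ⟨m, hm⟩
    have hm₁m : m₁ ≤ m := by
      have hnR : (n₀ : ℝ) ≤ n := by exact_mod_cast hn
      have := re_eq hm
      push_cast [Nat.cast_sub hlt.le] at this
      exact_mod_cast (show (m₁ : ℝ) ≤ m by nlinarith [re_eq hm₁])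
    refine ⟨m + m₀ - m₁, ?_⟩
    rw [Nat.cast_sub (by omega)]
    push_cast at hm ⊢
    linear_combination hm + hperiod
  · rintro ⟨m, hm⟩
    refine ⟨m + m₁ - m₀, ?_⟩
    rw [Nat.cast_sub (by omega)]
    push_cast at hm ⊢
    linear_combination hm - hperiod

theorem gammaSeq_mem_gammaSet_iff {α₁ α₂ : ℝ} (hα₁ : α₁ ≠ 0) (hα₂ : α₂ ≠ 0) (β₁ β₂ : ℂ) (n : ℕ) :
    gammaSeq α₁ β₁ n ∈ gammaSet α₂ β₂ ↔
      ∃ m : ℕ, (m : ℂ) = ((α₂ / α₁ : ℝ) : ℂ) * n + (α₂ * β₁ / α₁ - β₂) := by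
  have h₁ : (α₁ : ℂ) ≠ 0 := by exact_mod_cast hα₁
  have h₂ : (α₂ : ℂ) ≠ 0 := by exact_mod_cast hα₂
  rw [gammaSet_eq_range]
  refine exists_congr fun m => ?_
  simp only [gammaSeq, Complex.ofReal_div]
  rw [div_eq_div_iff h₂ h₁]
  field_simp
  constructor <;> intro h <;> linear_combination -h

theorem pairwiseDisjoint_range_add_mul (N q : ℕ) :
    (Ico N (N + q)).PairwiseDisjoint fun n₀ => range fun k => n₀ + q * k := by
  have key {a b k j : ℕ} (ha : a < N + q) (hb : N ≤ b) (hkj : k < j) : a + q * k ≠ b + q * j := by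
    have : q * (k + 1) ≤ q * j := Nat.mul_le_mul_left q hkj
    rw [mul_add_one] at this
    omega
  rintro a ⟨ha, ha'⟩ b ⟨hb, hb'⟩ hab
  refine disjoint_iff_forall_ne.mpr ?_
  rintro _ ⟨k, rfl⟩ _ ⟨j, rfl⟩
  rcases lt_trichotomy k j with hkj | rfl | hkj
  · exact key ha' hb hkj
  · simpa using hab
  · exact (key hb' ha hkj).symm

theorem image_gammaSeq_range_add_mul {q : ℕ} (hq : q ≠ 0) (α : ℝ) (β : ℂ) (n₀ : ℕ) :
    gammaSeq α β '' (range fun k => n₀ + q * k) = gammaSet (α / q) ((β + n₀) / q) := by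
  have hqc : (q : ℂ) ≠ 0 := by exact_mod_cast hq
  rw [gammaSet_eq_range, ← range_comp]
  congr 1
  funext k
  simp only [Function.comp_apply, gammaSeq, Complex.ofReal_div, Complex.ofReal_natCast]
  push_cast
  field_simp
  ring

section PeriodicTail

variable {α : ℝ} {A : Set ℕ} {N q : ℕ}

theorem add_mul_mem_iff_of_periodic_tail (hA : ∀ n ≥ N, n + q ∈ A ↔ n ∈ A) {n : ℕ} (hn : N ≤ n)
    (k : ℕ) : n + q * k ∈ A ↔ n ∈ A := by
  induction k with
  | zero => simp
  | succ k ih => rw [mul_add_one, ← add_assoc, hA _ (hn.trans (Nat.le_add_right _ _)), ih]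

theorem eq_inter_Iio_union_biUnion_of_periodic_tail [DecidablePred (· ∈ A)] (hq : 0 < q)
    (hA : ∀ n ≥ N, n + q ∈ A ↔ n ∈ A) :
    A = (A ∩ Iio N) ∪
      ⋃ n₀ ∈ (Finset.Ico N (N + q)).filter (· ∈ A), range fun k => n₀ + q * k := by
  ext n
  simp only [mem_union, mem_inter_iff, mem_Iio, mem_iUnion, Finset.mem_filter, Finset.mem_Ico,
    mem_range, exists_prop]
  constructor
  · intro hn
    rcases lt_or_ge n N with h | h
    · exact .inl ⟨hn, h⟩
    have hdecomp : N + (n - N) % q + q * ((n - N) / q) = n := by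
      rw [add_assoc, Nat.mod_add_div, Nat.add_sub_cancel' h]
    refine .inr ⟨N + (n - N) % q, ⟨⟨Nat.le_add_right _ _, ?_⟩, ?_⟩, (n - N) / q, hdecomp⟩
    · have := Nat.mod_lt (n - N) hq
      omega
    · rwa [← add_mul_mem_iff_of_periodic_tail hA (Nat.le_add_right _ _), hdecomp]
  · rintro (⟨hn, -⟩ | ⟨n₀, ⟨⟨hN, -⟩, hn₀⟩, k, rfl⟩)
    · exact hn
    · exact (add_mul_mem_iff_of_periodic_tail hA hN k).mpr hn₀

theorem image_gammaSeq_eq_of_periodic_tail [DecidablePred (· ∈ A)] (β : ℂ) (hq : 0 < q)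
    (hA : ∀ n ≥ N, n + q ∈ A ↔ n ∈ A) :
    gammaSeq α β '' A = gammaSeq α β '' (A ∩ Iio N) ∪
      ⋃ n₀ ∈ (Finset.Ico N (N + q)).filter (· ∈ A), gammaSet (α / q) ((β + n₀) / q) := by
  conv_lhs => rw [eq_inter_Iio_union_biUnion_of_periodic_tail hq hA]
  simp only [image_union, image_iUnion₂, image_gammaSeq_range_add_mul hq.ne']

theorem hasDensity_image_gammaSeq_of_periodic_tail [DecidablePred (· ∈ A)] (hα : 0 < α) (β : ℂ)
    (hq : 0 < q) (hA : ∀ n ≥ N, n + q ∈ A ↔ n ∈ A) :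
    HasDensity (gammaSeq α β '' A)
      (∑ _n₀ ∈ (Finset.Ico N (N + q)).filter (· ∈ A), α / q) := by
  set s := (Finset.Ico N (N + q)).filter (· ∈ A)
  set F : ℕ → Set ℂ := fun n₀ => gammaSet (α / q) ((β + n₀) / q)
  have hinj := gammaSeq_injective hα.ne' β
  have hs : ∀ n₀ ∈ s, n₀ ∈ Ico N (N + q) := fun n₀ hn₀ => by
    simpa using (Finset.mem_filter.mp hn₀).1
  have hFdisj : (s : Set ℕ).PairwiseDisjoint F := by
    intro a ha b hb hab
    simp only [Function.onFun, F, ← image_gammaSeq_range_add_mul hq.ne']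
    exact (disjoint_image_iff hinj).mpr (pairwiseDisjoint_range_add_mul N q (hs a ha) (hs b hb) hab)
  have hEdisj : Disjoint (gammaSeq α β '' (A ∩ Iio N)) (⋃ n₀ ∈ s, F n₀) := by
    refine disjoint_iUnion₂_right.mpr fun n₀ hn₀ => ?_
    simp only [F, ← image_gammaSeq_range_add_mul hq.ne']
    refine (disjoint_image_iff hinj).mpr (disjoint_left.mpr ?_)
    rintro _ ⟨-, hk⟩ ⟨k, rfl⟩
    have := (hs n₀ hn₀).1
    simp only [mem_Iio] at hk
    omega
  have hfin (t : ℝ) : (gammaSeq α β '' A ∩ {z : ℂ | -t < z.re}).Finite := by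
    refine (finite_gammaSet_inter_halfPlane hα β t).subset (inter_subset_inter_left _ ?_)
    rw [gammaSet_eq_range]
    exact image_subset_range _ _
  rw [image_gammaSeq_eq_of_periodic_tail β hq hA] at hfin ⊢
  rw [← zero_add (∑ _n₀ ∈ s, α / q)]
  refine (((finite_Iio N).subset inter_subset_right).image _).hasDensity_zero.union
    (hasDensity_biUnion s (fun n₀ _ => hasDensity_gammaSet (by positivity) _) hFdisj
      fun t => (hfin t).subset (by gcongr; exact subset_union_right)) hEdisj hfin

theorem image_gammaSeq_of_periodic_tail [DecidablePred (· ∈ A)] (hα : 0 < α) (β : ℂ) (hq : 0 < q)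
    (hA : ∀ n ≥ N, n + q ∈ A ↔ n ∈ A) :
    (gammaSeq α β '' A).Finite ∨
    ((∃ d : ℝ, 0 < d ∧ HasDensity (gammaSeq α β '' A) d) ∧
      ∃ (k : ℕ) (αs : Fin k → ℝ) (βs : Fin k → ℂ) (E : Set ℂ),
        (∀ i, 0 < αs i) ∧ E.Finite ∧
        gammaSeq α β '' A = (⋃ i, gammaSet (αs i) (βs i)) ∪ E) := by
  have hdecomp := image_gammaSeq_eq_of_periodic_tail (α := α) β hq hA
  set s := (Finset.Ico N (N + q)).filter (· ∈ A)
  set F : ℕ → Set ℂ := fun n₀ => gammaSet (α / q) ((β + n₀) / q)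
  have hE : (gammaSeq α β '' (A ∩ Iio N)).Finite :=
    ((finite_Iio N).subset inter_subset_right).image _
  rcases s.eq_empty_or_nonempty with hs | hs
  · left
    rw [hdecomp, hs]
    simpa using hE
  refine .inr ⟨⟨_, Finset.sum_pos (fun _ _ => by positivity) hs,
    hasDensity_image_gammaSeq_of_periodic_tail hα β hq hA⟩, ?_⟩
  refine ⟨s.card, fun _ => α / q, fun i => (β + (s.equivFin.symm i : ℕ)) / q, _,
    fun _ => by positivity, hE, ?_⟩
  rw [hdecomp, union_comm]
  congr 1
  change ⋃ n₀ ∈ s, F n₀ = ⋃ i, F (s.equivFin.symm i)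
  rw [s.equivFin.symm.surjective.iUnion_comp fun n₀ : s => F n₀]
  exact biUnion_eq_iUnion (s : Set ℕ) fun n₀ _ => F n₀

end PeriodicTail

/-- **Lemma.** For two γ-sets `W₁`, `W₂`, either `W₁ \ W₂` is finite, or it has strictly
positive density; in the latter case `W₁ \ W₂` is a union of finitely many γ-sets and a
finite set. -/
theorem gammaSet_diff (α₁ α₂ : ℝ) (hα₁ : 0 < α₁) (hα₂ : 0 < α₂) (β₁ β₂ : ℂ) :
    (gammaSet α₁ β₁ \ gammaSet α₂ β₂).Finite ∨
    ((∃ d : ℝ, 0 < d ∧ HasDensity (gammaSet α₁ β₁ \ gammaSet α₂ β₂) d) ∧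
      ∃ (k : ℕ) (αs : Fin k → ℝ) (βs : Fin k → ℂ) (E : Set ℂ),
        (∀ i, 0 < αs i) ∧ E.Finite ∧
        gammaSet α₁ β₁ \ gammaSet α₂ β₂ = (⋃ i, gammaSet (αs i) (βs i)) ∪ E) := by
  have hpre : gammaSeq α₁ β₁ ⁻¹' gammaSet α₂ β₂ =
      {n : ℕ | ∃ m : ℕ, (m : ℂ) = ((α₂ / α₁ : ℝ) : ℂ) * n + (α₂ * β₁ / α₁ - β₂)} :=
    ext fun n => gammaSeq_mem_gammaSet_iff hα₁.ne' hα₂.ne' β₁ β₂ n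
  obtain ⟨N, q, hq, hperiodic⟩ :=
    exists_periodic_tail_setOf_natCast_eq (div_pos hα₂ hα₁) (α₂ * β₁ / α₁ - β₂)
  rw [gammaSet_eq_range α₁ β₁, ← image_compl_preimage, hpre]
  classical
  exact image_gammaSeq_of_periodic_tail hα₁ β₁ hq fun n hn => not_congr (hperiodic n hn)
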